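/- Let p be a pmf on X × G × {0,1} satisfying PCC-invariance with respect to π : X → P. Let f'₊(x) = p(x|y=1,π(x)), f'₋(x) = p(x|y=0,π(x)), and α^g_k = p(y=1|g,π=k). Then for any (x,g) with p(x,g) > 0 and all conditioning events of positive probability, the group-aware posterior satisfies ρ̄(x,g) = p(y=1|x,g) = α^g_{π(x)}·f'₊(x) / (α^g_{π(x)}·f'₊(x) + (1−α^g_{π(x)})·f'₋(x)). -/
import Mathlib


open scoped Classical

/-- Probability of an event under a mass function on `X × G × Bool`. -/
noncomputable def prb {X G : Type*} [Fintype X] [Fintype G]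
    (p : X × G × Bool → ℝ) (A : X × G × Bool → Prop) : ℝ :=
  ∑ z : X × G × Bool, if A z then p z else 0

/-- Conditional probability `p(A | B)`. -/
noncomputable def cnd {X G : Type*} [Fintype X] [Fintype G]
    (p : X × G × Bool → ℝ) (A B : X × G × Bool → Prop) : ℝ :=
  prb p (fun z => A z ∧ B z) / prb p B

section Aux
variable {X G P : Type*} [Fintype X] [Fintype G] (π : X → P)
variable (p : X × G × Bool → ℝ)

lemma prb_congr (A B : X × G × Bool → Prop) (h : ∀ z, A z ↔ B z) :
    prb p A = prb p B := by
  unfold prb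
  refine Finset.sum_congr rfl fun z _ => ?_
  simp [h z]

lemma prb_nonneg (hnn : ∀ z, 0 ≤ p z) (A : X × G × Bool → Prop) : 0 ≤ prb p A := by
  refine Finset.sum_nonneg fun z _ => ?_
  split <;> simp [hnn z]

lemma prb_point (x : X) (g : G) (y : Bool) :
    prb p (fun z => z = (x, g, y)) = p (x, g, y) := by
  unfold prb
  refine (Finset.sum_eq_single (x, g, y) ?_ ?_).trans (if_pos rfl)
  · intro b _ hb; exact if_neg hb
  · intro h; exact absurd (Finset.mem_univ _) h

lemma prb_le (hnn : ∀ z, 0 ≤ p z) (A B : X × G × Bool → Prop) (h : ∀ z, A z → B z) :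
    prb p A ≤ prb p B := by
  refine Finset.sum_le_sum fun z _ => ?_
  by_cases hz : A z
  · simp [hz, h z hz]
  · simp only [hz, if_false]
    split <;> simp [hnn z]

lemma prb_split (A : X × G × Bool → Prop) :
    prb p A = prb p (fun z => z.2.2 = true ∧ A z) + prb p (fun z => z.2.2 = false ∧ A z) := by
  unfold prb
  rw [← Finset.sum_add_distrib]
  refine Finset.sum_congr rfl fun z _ => ?_
  rcases z with ⟨a, b, c⟩
  by_cases h : A (a, b, c) <;> cases c <;> simp_all

end Aux

/-- Under PCC-invariance, the group-aware posterior equals the two-component mixture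
posterior within the cluster `π(x)`, with mixing weight `α^g_{π(x)}` and cluster-projected
class-conditionals `f'₊, f'₋` that do not depend on the group. -/
theorem group_aware_posterior_mixture_form {X G P : Type*}
    [Fintype X] [Fintype G] (π : X → P)
    (p : X × G × Bool → ℝ) (hnn : ∀ z, 0 ≤ p z) (hsum : ∑ z, p z = 1)
    (hpcc : ∀ (x : X) (y : Bool) (g : G),
      0 < prb p (fun z => z.2.2 = y ∧ z.2.1 = g ∧ π z.1 = π x) →
      cnd p (fun z => z.1 = x) (fun z => z.2.2 = y ∧ z.2.1 = g ∧ π z.1 = π x)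
        = cnd p (fun z => z.1 = x) (fun z => z.2.2 = y ∧ π z.1 = π x))
    (x : X) (g : G)
    (hxg : 0 < prb p (fun z => z.1 = x ∧ z.2.1 = g))
    (hgk : 0 < prb p (fun z => z.2.1 = g ∧ π z.1 = π x))
    (hpk : 0 < prb p (fun z => z.2.2 = true ∧ π z.1 = π x))
    (hmk : 0 < prb p (fun z => z.2.2 = false ∧ π z.1 = π x)) :
    cnd p (fun z => z.2.2 = true) (fun z => z.1 = x ∧ z.2.1 = g)
      = cnd p (fun z => z.2.2 = true) (fun z => z.2.1 = g ∧ π z.1 = π x)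
          * cnd p (fun z => z.1 = x) (fun z => z.2.2 = true ∧ π z.1 = π x)
        / (cnd p (fun z => z.2.2 = true) (fun z => z.2.1 = g ∧ π z.1 = π x)
              * cnd p (fun z => z.1 = x) (fun z => z.2.2 = true ∧ π z.1 = π x)
            + (1 - cnd p (fun z => z.2.2 = true) (fun z => z.2.1 = g ∧ π z.1 = π x))
              * cnd p (fun z => z.1 = x) (fun z => z.2.2 = false ∧ π z.1 = π x)) := by
  -- abbreviations
  set Nt := prb p (fun z => z.2.2 = true ∧ z.2.1 = g ∧ π z.1 = π x) with hNt
  set Nf := prb p (fun z => z.2.2 = false ∧ z.2.1 = g ∧ π z.1 = π x) with hNf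
  set K := prb p (fun z => z.2.1 = g ∧ π z.1 = π x) with hKdef
  set Mt := prb p (fun z => z.2.2 = true ∧ π z.1 = π x) with hMt
  set Mf := prb p (fun z => z.2.2 = false ∧ π z.1 = π x) with hMf
  set ft := cnd p (fun z => z.1 = x) (fun z => z.2.2 = true ∧ π z.1 = π x) with hft
  set ff := cnd p (fun z => z.1 = x) (fun z => z.2.2 = false ∧ π z.1 = π x) with hff
  have hK : K = Nt + Nf := by
    rw [hKdef, prb_split p (fun z => z.2.1 = g ∧ π z.1 = π x)]
  -- point masses
  have hpt : ∀ y : Bool, prb p (fun z => z.1 = x ∧ z.2.2 = y ∧ z.2.1 = g ∧ π z.1 = π x)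
      = p (x, g, y) := by
    intro y
    rw [prb_congr p _ (fun z => z = (x, g, y)) ?_, prb_point]
    rintro ⟨a, b, c⟩
    simp only [Prod.mk.injEq]
    constructor
    · rintro ⟨rfl, rfl, rfl, -⟩; exact ⟨rfl, rfl, rfl⟩
    · rintro ⟨rfl, rfl, rfl⟩; exact ⟨rfl, rfl, rfl, rfl⟩
  have hpt2 : ∀ y : Bool, prb p (fun z => z.2.2 = y ∧ z.1 = x ∧ z.2.1 = g)
      = p (x, g, y) := by
    intro y
    rw [prb_congr p _ (fun z => z = (x, g, y)) ?_, prb_point]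
    rintro ⟨a, b, c⟩
    simp only [Prod.mk.injEq]
    constructor
    · rintro ⟨rfl, rfl, rfl⟩; exact ⟨rfl, rfl, rfl⟩
    · rintro ⟨rfl, rfl, rfl⟩; exact ⟨rfl, rfl, rfl⟩
  -- p(x,g) split
  have hxgsplit : prb p (fun z => z.1 = x ∧ z.2.1 = g) = p (x, g, true) + p (x, g, false) := by
    rw [prb_split]
    have h1 := hpt2 true
    have h2 := hpt2 false
    simp only [← h1, ← h2]
  -- key identity p(x,g,y) = N_y * f'_y
  have key : ∀ (y : Bool) (Ny M : ℝ), Ny = prb p (fun z => z.2.2 = y ∧ z.2.1 = g ∧ π z.1 = π x) →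
      p (x, g, y) = Ny * cnd p (fun z => z.1 = x) (fun z => z.2.2 = y ∧ π z.1 = π x) := by
    intro y Ny M hNy
    rcases lt_or_eq_of_le (prb_nonneg p hnn (fun z => z.2.2 = y ∧ z.2.1 = g ∧ π z.1 = π x)) with hpos | hzero
    · have h := hpcc x y g hpos
      have hnum : cnd p (fun z => z.1 = x) (fun z => z.2.2 = y ∧ z.2.1 = g ∧ π z.1 = π x)
          = p (x, g, y) / prb p (fun z => z.2.2 = y ∧ z.2.1 = g ∧ π z.1 = π x) := by
        unfold cnd
        rw [hpt y]
      rw [hnum] at h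
      rw [hNy, ← h, mul_div_cancel₀ _ (ne_of_gt hpos)]
    · have hle : p (x, g, y) ≤ prb p (fun z => z.2.2 = y ∧ z.2.1 = g ∧ π z.1 = π x) := by
        rw [← hpt y]
        exact prb_le p hnn _ _ (fun z => by tauto)
      have h0 : p (x, g, y) = 0 :=
        le_antisymm (by rw [← hzero] at hle; exact hle) (hnn _)
      rw [h0, hNy, ← hzero, mul_comm]
      ring
  have keyt : p (x, g, true) = Nt * ft := key true Nt 0 hNt
  have keyf : p (x, g, false) = Nf * ff := key false Nf 0 hNf
  -- positivity bits
  have hKpos : (0:ℝ) < K := hgk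
  have hKne : K ≠ 0 := ne_of_gt hKpos
  -- LHS computation
  have hLHS : cnd p (fun z => z.2.2 = true) (fun z => z.1 = x ∧ z.2.1 = g)
      = p (x, g, true) / (p (x, g, true) + p (x, g, false)) := by
    unfold cnd
    rw [hpt2 true, hxgsplit]
  -- alpha
  have halpha : cnd p (fun z => z.2.2 = true) (fun z => z.2.1 = g ∧ π z.1 = π x) = Nt / K := by
    unfold cnd
    congr 1
  have hone : 1 - Nt / K = Nf / K := by
    field_simp
    rw [hK]; ring
  have hden : 0 < Nt * ft + Nf * ff := by
    rw [← keyt, ← keyf, ← hxgsplit]; exact hxg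
  have hd2 : Nt / K * ft + Nf / K * ff = (Nt * ft + Nf * ff) / K := by
    field_simp
  have hd2pos : 0 < Nt / K * ft + Nf / K * ff := by
    rw [hd2]; positivity
  rw [hLHS, halpha, hone, keyt, keyf,
    div_eq_div_iff hden.ne' hd2pos.ne']
  rw [hd2]
  field_simp
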